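/- arXiv:1809.10298 — 2 statements merged into one kernel-verified Lean document; each statement's English description precedes it below -/
import Mathlib

section
/- For every even integer k ≥ 2 and every integer t ≥ 4, there exists a coloring of the edges of the complete graph on 2(t − 1)·5^{(k−2)/2} vertices using k colors that contains no rainbow triangle and no monochromatic copy of P_t^+. -/
open SimpleGraph

/-- `S_t^+`: the star on `t` vertices (center `0`, leaves `1, …, t-1`)
together with one extra edge between the leaves `1` and `2`, forming a triangle. -/
def starPlus (t : ℕ) : SimpleGraph (Fin t) :=
  SimpleGraph.fromRel (fun a b => a.val = 0 ∨ (a.val = 1 ∧ b.val = 2))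

/-- `P_t^+`: the path on `t` vertices `0, 1, …, t-1` (in order) together with
the extra edge between `0` and `2`, forming a triangle at one end. -/
def pathPlus (t : ℕ) : SimpleGraph (Fin t) :=
  SimpleGraph.fromRel (fun a b => b.val = a.val + 1 ∨ (a.val = 0 ∧ b.val = 2))

/-- An edge-coloring `c` of the complete graph on `V` contains a copy of `H`
in color `col`: an injective map of the vertices of `H` into `V` sending every
edge of `H` to a pair colored `col`. -/
def HasCopyIn {V C α : Type*} (c : Sym2 V → C) (col : C) (H : SimpleGraph α) : Prop :=
  ∃ f : α → V, Function.Injective f ∧ ∀ a b : α, H.Adj a b → c s(f a, f b) = col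

/-- An edge-coloring `c` of the complete graph on `V` contains a monochromatic copy of `H`. -/
def HasMonoCopy {V C α : Type*} (c : Sym2 V → C) (H : SimpleGraph α) : Prop :=
  ∃ col : C, HasCopyIn c col H

/-- An edge-coloring `c` of the complete graph on `V` contains a rainbow triangle:
three vertices whose three pairwise edges get pairwise distinct colors. -/
def HasRainbowTriangle {V C : Type*} (c : Sym2 V → C) : Prop :=
  ∃ u v w : V, u ≠ v ∧ u ≠ w ∧ v ≠ w ∧
    c s(u, v) ≠ c s(u, w) ∧ c s(u, v) ≠ c s(v, w) ∧ c s(u, w) ≠ c s(v, w)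

/-- The `k`-color Gallai-Ramsey number `gr_k(K_3 : H)`: the least `n` such that every
`k`-coloring of the edges of `K_n` contains a rainbow triangle or a monochromatic copy of `H`. -/
noncomputable def grK3 (k : ℕ) {α : Type*} (H : SimpleGraph α) : ℕ :=
  sInf {n : ℕ | ∀ c : Sym2 (Fin n) → Fin k, HasRainbowTriangle c ∨ HasMonoCopy c H}

/-- The `2`-color Ramsey number `R(G, H)`: the least `n` such that every red/blue
(`0`/`1`) coloring of the edges of `K_n` contains a red copy of `G` or a blue copy of `H`. -/
noncomputable def ramsey2 {α β : Type*} (G : SimpleGraph α) (H : SimpleGraph β) : ℕ :=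
  sInf {n : ℕ | ∀ c : Sym2 (Fin n) → Fin 2, HasCopyIn c 0 G ∨ HasCopyIn c 1 H}

/-! Start from two disjoint copies of `K_{t-1}` in one color, joined in a second color, and
repeatedly blow every vertex of a pentagon up into a copy of the current coloring, coloring
the pentagon's edges and non-edges with two fresh colors. Blowing up never creates a rainbow
triangle. Neither `K_2` nor the pentagon has a monochromatic triangle, so a monochromatic
triangle, and with it any monochromatic connected graph containing a triangle such as `P_t^+`,
stays inside one copy of the previous coloring, and in the end inside a `K_{t-1}`, which has
too few vertices. -/

section Colorings

variable {V W C D α : Type*}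

lemma hasRainbowTriangle_iff (c : Sym2 V → C) :
    HasRainbowTriangle c ↔
      ∃ u v w : V, c s(u, v) ≠ c s(u, w) ∧ c s(u, v) ≠ c s(v, w) ∧ c s(u, w) ≠ c s(v, w) := by
  refine ⟨fun ⟨u, v, w, _, _, _, h⟩ => ⟨u, v, w, h⟩, fun ⟨u, v, w, h₁, h₂, h₃⟩ => ?_⟩
  refine ⟨u, v, w, ?_, ?_, ?_, h₁, h₂, h₃⟩ <;> rintro rfl
  · exact h₃ rfl
  · exact h₂ (by rw [Sym2.eq_swap])
  · exact h₁ rfl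

lemma HasRainbowTriangle.of_comp {c : Sym2 V → C} (φ : W → V) (g : C → D)
    (h : HasRainbowTriangle (g ∘ c ∘ Sym2.map φ)) : HasRainbowTriangle c := by
  obtain ⟨u, v, w, h₁, h₂, h₃⟩ := (hasRainbowTriangle_iff _).1 h
  exact (hasRainbowTriangle_iff c).2
    ⟨φ u, φ v, φ w, fun e => h₁ (congrArg g e), fun e => h₂ (congrArg g e),
      fun e => h₃ (congrArg g e)⟩

lemma HasMonoCopy.of_comp {c : Sym2 V → C} {φ : W → V} (hφ : φ.Injective) (g : C ≃ D)
    {H : SimpleGraph α} (h : HasMonoCopy (g ∘ c ∘ Sym2.map φ) H) : HasMonoCopy c H := by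
  obtain ⟨col, f, hf, hcol⟩ := h
  exact ⟨g.symm col, φ ∘ f, hφ.comp hf, fun a b hab => g.eq_symm_apply.2 (hcol a b hab)⟩

lemma HasCopyIn.comp {c : Sym2 V → C} {col : C} {H : SimpleGraph α} {β : Type*}
    {H' : SimpleGraph β} (h : HasCopyIn c col H) (e : H'.Copy H) : HasCopyIn c col H' := by
  obtain ⟨f, hf, hcol⟩ := h
  exact ⟨f ∘ e, hf.comp e.injective, fun a b hab => hcol _ _ (e.toHom.map_adj hab)⟩

lemma not_hasRainbowTriangle_of_card_le_two [Fintype C] (hC : Fintype.card C ≤ 2)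
    (c : Sym2 V → C) : ¬ HasRainbowTriangle c := by
  classical
  rintro ⟨u, v, w, -, -, -, h₁, h₂, h₃⟩
  have : ({c s(u, v), c s(u, w), c s(v, w)} : Finset C).card = 3 :=
    Finset.card_eq_three.2 ⟨_, _, _, h₁, h₂, h₃, rfl⟩
  have := Finset.card_le_univ ({c s(u, v), c s(u, w), c s(v, w)} : Finset C)
  omega

lemma not_hasMonoCopy_of_card_lt [Fintype V] [Fintype α] {H : SimpleGraph α}
    (h : Fintype.card V < Fintype.card α) (c : Sym2 V → C) : ¬ HasMonoCopy c H := by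
  rintro ⟨-, f, hf, -⟩
  exact (Fintype.card_le_of_injective f hf).not_gt h

lemma SimpleGraph.Connected.eq_of_forall_adj {β : Type*} {H : SimpleGraph α} (hH : H.Connected)
    {g : α → β} (hg : ∀ a b, H.Adj a b → g a = g b) (a b : α) : g a = g b := by
  obtain ⟨p⟩ := hH a b
  induction p with
  | nil => rfl
  | cons h _ ih => exact (hg _ _ h).trans ih

/-- Every vertex of the `d`-colored complete graph on `W` is blown up into a `c`-colored copy
of the complete graph on `V`. -/
def lexColoring [DecidableEq W] (c : Sym2 V → C) (d : Sym2 W → D) : Sym2 (V × W) → C ⊕ D :=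
  Sym2.lift ⟨fun p q => if p.2 = q.2 then Sum.inl (c s(p.1, q.1)) else Sum.inr (d s(p.2, q.2)),
    fun p q => by simp only [eq_comm (a := p.2), Sym2.eq_swap]⟩

@[simp]
lemma lexColoring_mk [DecidableEq W] (c : Sym2 V → C) (d : Sym2 W → D) (p q : V × W) :
    lexColoring c d s(p, q) =
      if p.2 = q.2 then .inl (c s(p.1, q.1)) else .inr (d s(p.2, q.2)) :=
  rfl

variable [DecidableEq W] {c : Sym2 V → C} {d : Sym2 W → D}

lemma not_hasRainbowTriangle_lexColoring (hc : ¬ HasRainbowTriangle c)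
    (hd : ¬ HasRainbowTriangle d) : ¬ HasRainbowTriangle (lexColoring c d) := by
  rw [hasRainbowTriangle_iff] at hc hd ⊢
  rintro ⟨u, v, w, h₁, h₂, h₃⟩
  by_cases huv : u.2 = v.2 <;> by_cases hvw : v.2 = w.2
  · have huw : u.2 = w.2 := huv.trans hvw
    simp only [lexColoring_mk, huv, hvw, if_true, ne_eq, Sum.inl.injEq] at h₁ h₂ h₃
    exact hc ⟨_, _, _, h₁, h₂, h₃⟩
  · have huw : u.2 ≠ w.2 := huv ▸ hvw
    simp only [lexColoring_mk, hvw, huw, if_false] at h₃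
    exact h₃ (by rw [huv])
  · have huw : u.2 ≠ w.2 := hvw ▸ huv
    simp only [lexColoring_mk, huv, huw, if_false] at h₁
    exact h₁ (by rw [hvw])
  · by_cases huw : u.2 = w.2
    · simp only [lexColoring_mk, huv, hvw, if_false] at h₂
      rw [huw, Sym2.eq_swap] at h₂
      exact h₂ rfl
    · simp only [lexColoring_mk, huv, hvw, huw, if_false, ne_eq, Sum.inr.injEq] at h₁ h₂ h₃
      exact hd ⟨_, _, _, h₁, h₂, h₃⟩

lemma HasCopyIn.of_lexColoring_inr {x : D}
    (h : HasCopyIn (lexColoring c d) (.inr x) (⊤ : SimpleGraph α)) :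
    HasCopyIn d x (⊤ : SimpleGraph α) := by
  obtain ⟨f, -, hcol⟩ := h
  have hf : ∀ a b, a ≠ b → (f a).2 ≠ (f b).2 ∧ d s((f a).2, (f b).2) = x := by
    intro a b hab
    have := hcol a b hab
    simp only [lexColoring_mk] at this
    split_ifs at this with hfib
    exact ⟨hfib, Sum.inr_injective this⟩
  exact ⟨fun a => (f a).2, fun a b e => by_contra fun hab => (hf a b hab).1 e,
    fun a b hab => (hf a b hab).2⟩

lemma HasCopyIn.of_lexColoring_inl {H : SimpleGraph α} (hH : H.Connected) {x : C}
    (h : HasCopyIn (lexColoring c d) (.inl x) H) : HasCopyIn c x H := by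
  obtain ⟨f, hf, hcol⟩ := h
  have hfib : ∀ a b, H.Adj a b → (f a).2 = (f b).2 ∧ c s((f a).1, (f b).1) = x := by
    intro a b hab
    have := hcol a b hab
    simp only [lexColoring_mk] at this
    split_ifs at this with h
    exact ⟨h, Sum.inl_injective this⟩
  have hsame := hH.eq_of_forall_adj (g := fun a => (f a).2) fun a b hab => (hfib a b hab).1
  exact ⟨fun a => (f a).1, fun a b e => hf (Prod.ext e (hsame a b)),
    fun a b hab => (hfib a b hab).2⟩

lemma not_hasMonoCopy_lexColoring {H : SimpleGraph α} (hH : H.Connected)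
    (htri : (⊤ : SimpleGraph (Fin 3)).Copy H) (hc : ¬ HasMonoCopy c H)
    (hd : ¬ HasMonoCopy d (⊤ : SimpleGraph (Fin 3))) : ¬ HasMonoCopy (lexColoring c d) H := by
  rintro ⟨x | x, hx⟩
  · exact hc ⟨x, hx.of_lexColoring_inl hH⟩
  · exact hd ⟨x, (hx.comp htri).of_lexColoring_inr⟩

end Colorings

lemma exists_fin_coloring_of_card_eq {V C α : Type*} [Fintype V] [Fintype C]
    {H : SimpleGraph α} {n k : ℕ} (c : Sym2 V → C) (hV : Fintype.card V = n)
    (hC : Fintype.card C = k) (hr : ¬ HasRainbowTriangle c) (hm : ¬ HasMonoCopy c H) :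
    ∃ c' : Sym2 (Fin n) → Fin k, ¬ HasRainbowTriangle c' ∧ ¬ HasMonoCopy c' H :=
  ⟨Fintype.equivFinOfCardEq hC ∘ c ∘ Sym2.map (Fintype.equivFinOfCardEq hV).symm,
    fun h => hr (h.of_comp _ _), fun h => hm (h.of_comp (Equiv.injective _) _)⟩

/-- `C_5` is triangle-free and self-complementary, so neither color class has a triangle. -/
def pentagonColoring : Sym2 (Fin 5) → Bool := fun e => decide (e ∈ (cycleGraph 5).edgeSet)

lemma not_hasMonoCopy_pentagonColoring :
    ¬ HasMonoCopy pentagonColoring (⊤ : SimpleGraph (Fin 3)) := by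
  rintro ⟨x, f, hf, hcol⟩
  have h₀₁ := hcol 0 1 (by decide)
  have h₁₂ := hcol 1 2 (by decide)
  have h₀₂ := hcol 0 2 (by decide)
  have n₀₁ : f 0 ≠ f 1 := hf.ne (by decide)
  have n₁₂ : f 1 ≠ f 2 := hf.ne (by decide)
  have n₀₂ : f 0 ≠ f 2 := hf.ne (by decide)
  simp only [pentagonColoring, SimpleGraph.mem_edgeSet] at h₀₁ h₁₂ h₀₂
  clear hcol hf
  revert n₀₁ n₁₂ n₀₂ h₀₁ h₁₂ h₀₂
  generalize f 0 = a, f 1 = b, f 2 = c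
  revert a b c x
  decide

lemma pathGraph_le_pathPlus (t : ℕ) : pathGraph t ≤ pathPlus t := by
  intro a b h
  rw [pathGraph_adj] at h
  rw [pathPlus, fromRel_adj]
  refine ⟨fun e => ?_, ?_⟩
  · subst e; omega
  · omega

lemma pathPlus_connected {t : ℕ} (ht : 0 < t) : (pathPlus t).Connected := by
  obtain ⟨n, rfl⟩ : ∃ n, t = n + 1 := ⟨t - 1, by omega⟩
  exact (pathGraph_connected n).mono (pathGraph_le_pathPlus _)

def pathPlusTriangle {t : ℕ} (ht : 3 ≤ t) : (⊤ : SimpleGraph (Fin 3)).Copy (pathPlus t) :=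
  ⟨⟨Fin.castLE ht, fun {i j} h => by
    simp only [top_adj] at h
    simp only [pathPlus, fromRel_adj, ne_eq, Fin.ext_iff, Fin.val_castLE]
    revert i j
    decide⟩, Fin.castLE_injective ht⟩

lemma exists_coloring_pathPlus {t : ℕ} (ht : 3 ≤ t) (m : ℕ) :
    ∃ c : Sym2 (Fin (2 * (t - 1) * 5 ^ m)) → Fin (2 * m + 2),
      ¬ HasRainbowTriangle c ∧ ¬ HasMonoCopy c (pathPlus t) := by
  have hconn := pathPlus_connected (t := t) (by omega)
  induction m with
  | zero =>
    let c := lexColoring (fun _ : Sym2 (Fin (t - 1)) => ()) (fun _ : Sym2 (Fin 2) => ())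
    exact exists_fin_coloring_of_card_eq c (by simp [mul_comm]) (by simp)
      (not_hasRainbowTriangle_of_card_le_two (by simp) c)
      (not_hasMonoCopy_lexColoring hconn (pathPlusTriangle ht)
        (not_hasMonoCopy_of_card_lt (by rw [Fintype.card_fin, Fintype.card_fin]; omega) _)
        (not_hasMonoCopy_of_card_lt (by simp) _))
  | succ m ih =>
    obtain ⟨c, hr, hm⟩ := ih
    exact exists_fin_coloring_of_card_eq (lexColoring c pentagonColoring)
      (by simp [pow_succ, mul_assoc])
      (by simp only [Fintype.card_sum, Fintype.card_fin, Fintype.card_bool]; ring)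
      (not_hasRainbowTriangle_lexColoring hr (not_hasRainbowTriangle_of_card_le_two (by simp) _))
      (not_hasMonoCopy_lexColoring hconn (pathPlusTriangle ht) hm
        not_hasMonoCopy_pentagonColoring)

/-- For every even `k ≥ 2` and `t ≥ 4`, there is a `k`-coloring of the edges of the
complete graph on `2(t-1)·5^((k-2)/2)` vertices with no rainbow triangle and no
monochromatic copy of `P_t^+`. -/
theorem gallaiRamsey_pathPlus_lower_even (k t : ℕ) (hk : 2 ≤ k) (hke : Even k) (ht : 4 ≤ t) :
    ∃ c : Sym2 (Fin (2 * (t - 1) * 5 ^ ((k - 2) / 2))) → Fin k,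
      ¬ HasRainbowTriangle c ∧ ¬ HasMonoCopy c (pathPlus t) := by
  obtain ⟨c, hr, hm⟩ := exists_coloring_pathPlus (by omega : 3 ≤ t) ((k - 2) / 2)
  have hk' : 2 * ((k - 2) / 2) + 2 = k := by obtain ⟨r, rfl⟩ := hke; omega
  exact exists_fin_coloring_of_card_eq c (by simp) (by simp [hk']) hr hm
end

section
/- For every odd integer k ≥ 1 and every integer t ≥ 4, there exists a coloring of the edges of the complete graph on (t − 1)·5^{(k−1)/2} vertices using k colors that contains no rainbow triangle and no monochromatic copy of P_t^+. -/
open SimpleGraph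

/-!
Vertices are pairs `(a, i) ∈ (ZMod 5)^m × Fin (t - 1)`. Pairs with the same `a` get the colour
`⊥`; otherwise the colour is `(j, s)`, where `j` is the highest coordinate at which the `a`'s
differ and `s` says whether they differ there by `±1` or by `±2`. The highest differing coordinate
is an ultrametric, so in a triangle either one edge lies strictly below the other two, which then
have the same colour, or all three edges lie on one level, where only two tags exist: there is no
rainbow triangle. Each colour `(j, s)` is triangle-free because `±1` and `±2` split `K_5` into two
5-cycles, whereas `P_t^+` contains a triangle; and `⊥`-edges stay inside blocks of `t - 1`
vertices, too few for the connected graph `P_t^+`.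
-/

open Finset

section Transfer

variable {V W C D α : Type*}

theorem HasRainbowTriangle.of_comp_map (g : C → D) {e : W → V} (he : Function.Injective e)
    {c : Sym2 V → C} (h : HasRainbowTriangle (g ∘ c ∘ Sym2.map e)) : HasRainbowTriangle c := by
  obtain ⟨u, v, w, huv, huw, hvw, h₁, h₂, h₃⟩ := h
  exact ⟨e u, e v, e w, he.ne huv, he.ne huw, he.ne hvw,
    fun h => h₁ (congrArg g h), fun h => h₂ (congrArg g h), fun h => h₃ (congrArg g h)⟩

theorem HasMonoCopy.of_comp_map (g : C ≃ D) {e : W → V} (he : Function.Injective e)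
    {c : Sym2 V → C} {H : SimpleGraph α} (h : HasMonoCopy (g ∘ c ∘ Sym2.map e) H) :
    HasMonoCopy c H := by
  obtain ⟨col, f, hf, hadj⟩ := h
  exact ⟨g.symm col, e ∘ f, he.comp hf, fun a b hab => g.eq_symm_apply.mpr (hadj a b hab)⟩

end Transfer

section DiffLevel

variable {ι α : Type*} [Fintype ι] [LinearOrder ι] [DecidableEq α]

def diffLevel (a b : ι → α) : WithBot ι := (univ.filter fun i => a i ≠ b i).max

variable {a b : ι → α}

theorem diffLevel_comm (a b : ι → α) : diffLevel a b = diffLevel b a := by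
  simp only [diffLevel, ne_comm]

theorem diffLevel_eq_bot : diffLevel a b = ⊥ ↔ a = b := by
  simp [diffLevel, Finset.max_eq_bot, filter_eq_empty_iff, funext_iff]

theorem apply_ne_of_diffLevel_eq {j : ι} (h : diffLevel a b = j) : a j ≠ b j :=
  (mem_filter.mp (mem_of_max h)).2

theorem apply_eq_of_diffLevel_lt {j : ι} (h : diffLevel a b < j) : a j = b j := by
  by_contra hj
  exact notMem_of_max_lt_coe h (mem_filter.mpr ⟨mem_univ j, hj⟩)

theorem diffLevel_le_max (a b c : ι → α) :
    diffLevel a c ≤ max (diffLevel a b) (diffLevel b c) := by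
  rw [diffLevel, diffLevel, diffLevel, ← max_union]
  refine max_mono fun i hi => ?_
  simp only [mem_union, mem_filter, mem_univ, true_and] at hi ⊢
  by_contra! h
  exact hi (h.1.trans h.2)

end DiffLevel

section LevelColor

variable {ι α : Type*} [Fintype ι] [LinearOrder ι] [DecidableEq α]

def levelColor (τ : α → α → Bool) (a b : ι → α) : WithBot (ι × Bool) :=
  (diffLevel a b).map fun j => (j, τ (a j) (b j))

variable {τ : α → α → Bool} {a b c : ι → α}

theorem levelColor_comm (hτ : ∀ x y, τ x y = τ y x) (a b : ι → α) :
    levelColor τ a b = levelColor τ b a := by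
  simp only [levelColor, diffLevel_comm a b, hτ (a _)]

theorem levelColor_eq_bot : levelColor τ a b = ⊥ ↔ a = b := by
  rw [levelColor, WithBot.map_eq_bot_iff, diffLevel_eq_bot]

theorem levelColor_eq_coe {j : ι} {s : Bool} :
    levelColor τ a b = ((j, s) : ι × Bool) ↔ diffLevel a b = j ∧ τ (a j) (b j) = s := by
  simp [levelColor, WithBot.map_eq_some_iff]

theorem levelColor_eq_of_diffLevel_lt (h : diffLevel a b < diffLevel a c) :
    levelColor τ a c = levelColor τ b c := by
  have hbc : diffLevel b c = diffLevel a c :=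
    le_antisymm ((diffLevel_le_max b a c).trans (max_le (diffLevel_comm b a ▸ h.le) le_rfl))
      ((le_max_iff.mp (diffLevel_le_max a b c)).resolve_left h.not_ge)
  obtain ⟨j, hj⟩ := WithBot.ne_bot_iff_exists.mp h.ne_bot
  simp only [levelColor, hbc, ← hj, WithBot.map_coe, apply_eq_of_diffLevel_lt (hj ▸ h)]

theorem levelColor_not_rainbow (hτ : ∀ x y, τ x y = τ y x) (a b c : ι → α) :
    levelColor τ a b = levelColor τ a c ∨ levelColor τ a b = levelColor τ b c ∨
      levelColor τ a c = levelColor τ b c := by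
  rcases lt_trichotomy (diffLevel a b) (diffLevel a c) with h | hac | h
  · exact .inr (.inr (levelColor_eq_of_diffLevel_lt h))
  · rcases lt_trichotomy (diffLevel b c) (diffLevel b a) with h | hbc | h
    · left
      rw [levelColor_comm hτ a b, levelColor_eq_of_diffLevel_lt h, levelColor_comm hτ c a]
    · rw [diffLevel_comm b a] at hbc
      cases hL : diffLevel a b using WithBot.recBotCoe with
      | bot => simp only [levelColor, ← hac, hL, WithBot.map_bot, true_or]
      | coe j =>
        simp only [levelColor, ← hac, hbc, hL, WithBot.map_coe, WithBot.coe_inj, Prod.mk.injEq,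
          true_and]
        cases τ (a j) (b j) <;> cases τ (a j) (c j) <;> cases τ (b j) (c j) <;> simp
    · exact .inr (.inr (levelColor_eq_of_diffLevel_lt h).symm)
  · rw [levelColor_eq_of_diffLevel_lt h, levelColor_comm hτ c b]
    exact .inr (.inl rfl)

end LevelColor

section PathPlus

variable {V C : Type*} {t : ℕ}

theorem pathPlus_adj_succ {i : ℕ} (h : i + 1 < t) :
    (pathPlus t).Adj ⟨i, by omega⟩ ⟨i + 1, h⟩ := by
  simp [pathPlus, Fin.ext_iff]

theorem pathPlus_adj_zero_two (h : 2 < t) : (pathPlus t).Adj ⟨0, by omega⟩ ⟨2, h⟩ := by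
  simp [pathPlus, Fin.ext_iff]

theorem not_hasCopyIn_pathPlus_of_triangleFree {c : Sym2 V → C} {col : C} (ht : 3 ≤ t)
    (hc : ∀ x y z, x ≠ y → y ≠ z → x ≠ z →
      c s(x, y) = col → c s(y, z) = col → c s(x, z) = col → False) :
    ¬ HasCopyIn c col (pathPlus t) := by
  rintro ⟨f, hf, hcol⟩
  have h2 : 2 < t := by omega
  exact hc (f ⟨0, by omega⟩) (f ⟨1, by omega⟩) (f ⟨2, h2⟩)
    (hf.ne (by simp)) (hf.ne (by simp)) (hf.ne (by simp))
    (hcol _ _ (pathPlus_adj_succ (by omega))) (hcol _ _ (pathPlus_adj_succ h2))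
    (hcol _ _ (pathPlus_adj_zero_two h2))

theorem not_hasCopyIn_pathPlus_of_fiberwise {A β : Type*} [Fintype β] {c : Sym2 (A × β) → C}
    {col : C} (hβ : Fintype.card β < t) (hc : ∀ x y, c s(x, y) = col → x.1 = y.1) :
    ¬ HasCopyIn c col (pathPlus t) := by
  rintro ⟨f, hf, hcol⟩
  have hfst : ∀ i (hi : i < t), (f ⟨i, hi⟩).1 = (f ⟨0, by omega⟩).1 := by
    intro i
    induction i with
    | zero => exact fun _ => rfl
    | succ i ih =>
      intro hi
      rw [← ih (by omega)]
      exact (hc _ _ (hcol _ _ (pathPlus_adj_succ hi))).symm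
  have hsnd : Function.Injective fun i => (f i).2 := fun i j hij =>
    hf (Prod.ext ((hfst i i.2).trans (hfst j j.2).symm) hij)
  exact hβ.not_ge (by simpa using Fintype.card_le_of_injective _ hsnd)

end PathPlus

-- Splits `K_5` on `ZMod 5` into the 5-cycle of differences `±1` and the pentagram of `±2`.
def pentagonTag (x y : ZMod 5) : Bool := decide (x - y = 1 ∨ y - x = 1)

theorem pentagonTag_comm (x y : ZMod 5) : pentagonTag x y = pentagonTag y x := by
  simp only [pentagonTag, or_comm]

theorem pentagonTag_not_monochromatic (x y z : ZMod 5) (hxy : x ≠ y) (hyz : y ≠ z) (hxz : x ≠ z) :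
    ¬ (pentagonTag x y = pentagonTag y z ∧ pentagonTag x y = pentagonTag x z) := by
  revert x y z
  decide

section BlockColoring

variable {ι α : Type*} [Fintype ι] [LinearOrder ι] [DecidableEq α]

def blockColoring (τ : α → α → Bool) (hτ : ∀ x y, τ x y = τ y x) (β : Type*) :
    Sym2 ((ι → α) × β) → WithBot (ι × Bool) :=
  Sym2.lift ⟨fun x y => levelColor τ x.1 y.1, fun x y => levelColor_comm hτ x.1 y.1⟩

theorem blockColoring_not_hasRainbowTriangle (τ : α → α → Bool) (hτ : ∀ x y, τ x y = τ y x)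
    (β : Type*) : ¬ HasRainbowTriangle (blockColoring (ι := ι) τ hτ β) := by
  rintro ⟨x, y, z, -, -, -, h₁, h₂, h₃⟩
  rcases levelColor_not_rainbow hτ x.1 y.1 z.1 with h | h | h
  exacts [h₁ h, h₂ h, h₃ h]

theorem levelColor_pentagonTag_triangleFree {a b c : ι → ZMod 5} {p : ι × Bool}
    (hab : levelColor pentagonTag a b = p) (hbc : levelColor pentagonTag b c = p)
    (hac : levelColor pentagonTag a c = p) : False := by
  obtain ⟨j, s⟩ := p
  rw [levelColor_eq_coe] at hab hbc hac
  exact pentagonTag_not_monochromatic _ _ _ (apply_ne_of_diffLevel_eq hab.1)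
    (apply_ne_of_diffLevel_eq hbc.1) (apply_ne_of_diffLevel_eq hac.1)
    ⟨hab.2.trans hbc.2.symm, hab.2.trans hac.2.symm⟩

theorem blockColoring_pentagonTag_not_hasMonoCopy_pathPlus {β : Type*} [Fintype β] {t : ℕ}
    (hβ : Fintype.card β < t) (ht : 3 ≤ t) :
    ¬ HasMonoCopy (blockColoring (ι := ι) pentagonTag pentagonTag_comm β) (pathPlus t) := by
  rintro ⟨col, hcopy⟩
  induction col using WithBot.recBotCoe with
  | bot => exact not_hasCopyIn_pathPlus_of_fiberwise hβ (fun x y h => levelColor_eq_bot.mp h) hcopy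
  | coe p =>
    exact not_hasCopyIn_pathPlus_of_triangleFree ht
      (fun _ _ _ _ _ _ => levelColor_pentagonTag_triangleFree) hcopy

end BlockColoring

theorem gallaiRamsey_pathPlus_lower_odd_general (k t : ℕ) (hko : Odd k) (ht : 4 ≤ t) :
    ∃ c : Sym2 (Fin ((t - 1) * 5 ^ ((k - 1) / 2))) → Fin k,
      ¬ HasRainbowTriangle c ∧ ¬ HasMonoCopy c (pathPlus t) := by
  set m := (k - 1) / 2
  have hk : k = 2 * m + 1 := by obtain ⟨r, rfl⟩ := hko; omega
  let e : Fin ((t - 1) * 5 ^ m) ≃ (Fin m → ZMod 5) × Fin (t - 1) :=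
    (Fintype.equivFinOfCardEq (by simp [mul_comm])).symm
  let g : WithBot (Fin m × Bool) ≃ Fin k :=
    Fintype.equivFinOfCardEq (Fintype.card_option.trans (by simp; omega))
  let c := blockColoring (ι := Fin m) pentagonTag pentagonTag_comm (Fin (t - 1))
  refine ⟨g ∘ c ∘ Sym2.map e, fun h => ?_, fun h => ?_⟩
  · exact blockColoring_not_hasRainbowTriangle _ _ _ (h.of_comp_map g e.injective)
  · exact blockColoring_pentagonTag_not_hasMonoCopy_pathPlus (by simp; omega) (by omega)
      (h.of_comp_map g e.injective)

/-- For every odd `k ≥ 1` and `t ≥ 4`, there is a `k`-coloring of the edges of the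
complete graph on `(t-1)·5^((k-1)/2)` vertices with no rainbow triangle and no
monochromatic copy of `P_t^+`. -/
theorem gallaiRamsey_pathPlus_lower_odd (k t : ℕ) (hk : 1 ≤ k) (hko : Odd k) (ht : 4 ≤ t) :
    ∃ c : Sym2 (Fin ((t - 1) * 5 ^ ((k - 1) / 2))) → Fin k,
      ¬ HasRainbowTriangle c ∧ ¬ HasMonoCopy c (pathPlus t) :=
  gallaiRamsey_pathPlus_lower_odd_general k t hko ht
end
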